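/- arXiv:1408.6922 — 9 statements merged into one kernel-verified Lean document; each statement's English description precedes it below -/
import Mathlib

section
/- If K ⊂ E is a regular (closed, convex, pointed, full-dimensional) cone and δ ∈ K* \ {0} satisfies ⟨δ, x⟩ = 0 for all x in S(A,K,B), then no valid linear inequality for S(A,K,B) is K-minimal. -/
open RealInnerProductSpace

noncomputable section

variable {E F : Type*} [NormedAddCommGroup E] [InnerProductSpace ℝ E]
  [NormedAddCommGroup F] [InnerProductSpace ℝ F]
  [FiniteDimensional ℝ E] [FiniteDimensional ℝ F]

/-- The dual cone `K* = {y : ⟨x,y⟩ ≥ 0 for all x ∈ K}`. -/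
def DualCone (K : Set E) : Set E := {y | ∀ x ∈ K, 0 ≤ ⟪x, y⟫}

/-- A regular cone: closed, convex, a cone, pointed, and full-dimensional. -/
def IsRegularCone (K : Set E) : Prop :=
  IsClosed K ∧ Convex ℝ K ∧ (∀ c : ℝ, 0 < c → ∀ x ∈ K, c • x ∈ K) ∧
    (K ∩ (-K) ⊆ {(0 : E)}) ∧ (interior K).Nonempty

/-- `(μ; η)` is a valid linear inequality for `S`: `⟨μ,x⟩ ≥ η` on `S`. -/
def ValidIneq (S : Set E) (μ : E) (η : ℝ) : Prop := ∀ x ∈ S, η ≤ ⟪μ, x⟫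

/-- `(μ; η)` is a `K`-minimal valid inequality for `S`. -/
def KMinimal (K S : Set E) (μ : E) (η : ℝ) : Prop :=
  μ ≠ 0 ∧ ValidIneq S μ η ∧
    ∀ ρ : E, ∀ ρ₀ : ℝ, ValidIneq S ρ ρ₀ → ρ ≠ μ → μ - ρ ∈ DualCone K → ρ₀ < η

/-- `x` generates an extreme ray of the cone `K`. -/
def IsExtremeRay (K : Set E) (x : E) : Prop :=
  x ∈ K ∧ x ≠ 0 ∧ ∀ y ∈ K, ∀ z ∈ K, x = y + z → ∃ t : ℝ, 0 ≤ t ∧ y = t • x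

/-- Support function of a set `D`. -/
def SuppFn (D : Set F) (z : F) : ℝ := sSup ((fun lam => ⟪z, lam⟫) '' D)

/-- The cut generating set `D_μ = {λ : μ - A*λ ∈ K*}`. -/
def CutGenSet (K : Set E) (A : E →ₗ[ℝ] F) (μ : E) : Set F :=
  {lam | μ - LinearMap.adjoint A lam ∈ DualCone K}

/-- `(μ; η)` is a `K`-sublinear inequality for `S`: condition (A.1(α)) for every
extreme ray α of `K*`, together with validity (A.2). -/
def KSublinear (K S : Set E) (A : E →ₗ[ℝ] F) (μ : E) (η : ℝ) : Prop :=
  μ ≠ 0 ∧ ValidIneq S μ η ∧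
    ∀ α : E, IsExtremeRay (DualCone K) α →
      ∀ u : E, A u = 0 → (∀ v : E, IsExtremeRay K v → ⟪α, v⟫ • u + v ∈ K) →
        0 ≤ ⟪μ, u⟫


/-- If `δ ∈ K* \ {0}` vanishes on `S(A,K,B)`, then no valid inequality is `K`-minimal. -/
theorem stmt0 (K : Set E) (A : E →ₗ[ℝ] F) (B : Set F)
    (hK : IsRegularCone K) (hB : B.Nonempty)
    (δ : E) (hδK : δ ∈ DualCone K) (hδ0 : δ ≠ 0)
    (hδeq : ∀ x ∈ {x | x ∈ K ∧ A x ∈ B}, ⟪δ, x⟫ = 0) :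
    ∀ (μ : E) (η₀ : ℝ), ¬ KMinimal K {x | x ∈ K ∧ A x ∈ B} μ η₀ := by
  rintro μ η₀ ⟨hμ0, hvalid, hmin⟩
  have hval : ValidIneq {x | x ∈ K ∧ A x ∈ B} (μ - δ) η₀ := by
    intro x hx
    have := hvalid x hx
    have h0 := hδeq x hx
    rw [inner_sub_left, h0]
    linarith
  have hne : μ - δ ≠ μ := by
    intro h
    apply hδ0
    have : μ - δ = μ - 0 := by simpa using h
    simpa using (sub_right_injective this)
  have := hmin (μ - δ) η₀ hval hne (by simpa using hδK)
  exact lt_irrefl _ this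
end
end

section
/- If (μ;η₀) is a K-minimal valid inequality for S(A,K,B) and μ ∈ K*, then η₀ = ϑ(μ) := inf{⟨μ,x⟩ : x ∈ S(A,K,B)} and ϑ(μ) > 0. (Here one assumes S(A,K,B) ≠ ∅ and Assumption 1: for every δ ∈ K* \ {0} there exists x ∈ S(A,K,B) with ⟨δ,x⟩ > 0.) -/
open RealInnerProductSpace

noncomputable section

variable {E F : Type*} [NormedAddCommGroup E] [InnerProductSpace ℝ E]
  [NormedAddCommGroup F] [InnerProductSpace ℝ F]
  [FiniteDimensional ℝ E] [FiniteDimensional ℝ F]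

/-- A `K`-minimal inequality with `μ ∈ K*` is tight, with positive right hand side. -/
theorem stmt2 (K : Set E) (A : E →ₗ[ℝ] F) (B : Set F)
    (hK : IsRegularCone K)
    (hSne : ({x | x ∈ K ∧ A x ∈ B} : Set E).Nonempty)
    (hA1 : ∀ δ ∈ DualCone K, δ ≠ 0 → ∃ x ∈ {x | x ∈ K ∧ A x ∈ B}, 0 < ⟪δ, x⟫)
    (μ : E) (η₀ : ℝ)
    (hmin : KMinimal K {x | x ∈ K ∧ A x ∈ B} μ η₀)
    (hμ : μ ∈ DualCone K) :
    η₀ = sInf ((fun x => ⟪μ, x⟫) '' {x | x ∈ K ∧ A x ∈ B}) ∧ 0 < sInf ((fun x => ⟪μ, x⟫) '' {x | x ∈ K ∧ A x ∈ B}) := by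
  classical
  set S : Set E := {x | x ∈ K ∧ A x ∈ B} with hS
  obtain ⟨hμne, hvalid, hminim⟩ := hmin
  set m : ℝ := sInf ((fun x => ⟪μ, x⟫) '' S) with hm
  have hne : ((fun x => ⟪μ, x⟫) '' S).Nonempty := hSne.image _
  have hbdd : BddBelow ((fun x => ⟪μ, x⟫) '' S) := by
    refine ⟨η₀, ?_⟩
    rintro y ⟨x, hx, rfl⟩
    exact hvalid x hx
  have hle : η₀ ≤ m := le_csInf hne (by rintro y ⟨x, hx, rfl⟩; exact hvalid x hx)
  -- for each t ∈ (0,1), (t•μ, t*m) is valid, hence t*m < η₀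
  have key : ∀ t : ℝ, 0 < t → t < 1 → t * m < η₀ := by
    intro t ht0 ht1
    refine hminim (t • μ) (t * m) ?_ ?_ ?_
    · intro x hx
      have hmx : m ≤ ⟪μ, x⟫ := csInf_le hbdd ⟨x, hx, rfl⟩
      have : ⟪t • μ, x⟫ = t * ⟪μ, x⟫ := real_inner_smul_left μ x t
      rw [this]
      exact mul_le_mul_of_nonneg_left hmx ht0.le
    · intro h
      have h1 : (1 - t) • μ = 0 := by
        rw [sub_smul, one_smul, h, sub_self]
      rcases smul_eq_zero.mp h1 with h' | h'
      · exact absurd h' (by intro hh; linarith [sub_eq_zero.mp hh])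
      · exact hμne h'
    · intro x hx
      have : μ - t • μ = (1 - t) • μ := by rw [sub_smul, one_smul]
      rw [this, real_inner_smul_right]
      exact mul_nonneg (by linarith) (hμ x hx)
  -- m > 0
  have hmpos : 0 < m := by
    by_contra h
    push_neg at h
    have h2 := key (1/2) (by norm_num) (by norm_num)
    nlinarith
  have hge : m ≤ η₀ := by
    by_contra h
    push_neg at h
    -- pick t with η₀/m < t < 1
    have hη₀pos : 0 < η₀ := by
      have h2 := key (1/2) (by norm_num) (by norm_num)
      nlinarith
    obtain ⟨t, ht1, ht2⟩ := exists_between (show η₀ / m < 1 from (div_lt_one hmpos).mpr h)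
    have ht0 : 0 < t := lt_trans (by positivity) ht1
    have htm : η₀ < t * m := by
      rw [div_lt_iff₀ hmpos] at ht1
      linarith
    exact absurd (key t ht0 ht2) (not_lt.mpr htm.le)
  exact ⟨le_antisymm hle hge, hmpos⟩
end
end

section
/- If (μ;η₀) is a K-minimal valid inequality for S(A,K,B) with −μ ∈ K*, and Assumption 1 holds, then η₀ = ϑ(μ) and ϑ(μ) < 0. -/
open RealInnerProductSpace

noncomputable section

variable {E F : Type*} [NormedAddCommGroup E] [InnerProductSpace ℝ E]
  [NormedAddCommGroup F] [InnerProductSpace ℝ F]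
  [FiniteDimensional ℝ E] [FiniteDimensional ℝ F]

/-- A `K`-minimal inequality with `-μ ∈ K*` is tight, with negative right hand side. -/
theorem stmt3 (K : Set E) (A : E →ₗ[ℝ] F) (B : Set F)
    (hK : IsRegularCone K)
    (hSne : ({x | x ∈ K ∧ A x ∈ B} : Set E).Nonempty)
    (hA1 : ∀ δ ∈ DualCone K, δ ≠ 0 → ∃ x ∈ {x | x ∈ K ∧ A x ∈ B}, 0 < ⟪δ, x⟫)
    (μ : E) (η₀ : ℝ)
    (hmin : KMinimal K {x | x ∈ K ∧ A x ∈ B} μ η₀)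
    (hμ : -μ ∈ DualCone K) :
    η₀ = sInf ((fun x => ⟪μ, x⟫) '' {x | x ∈ K ∧ A x ∈ B}) ∧ sInf ((fun x => ⟪μ, x⟫) '' {x | x ∈ K ∧ A x ∈ B}) < 0 := by

  obtain ⟨hμne, hval, hminim⟩ := hmin
  set S : Set E := {x | x ∈ K ∧ A x ∈ B} with hS
  set T : Set ℝ := (fun x => ⟪μ, x⟫) '' S with hT
  have hTne : T.Nonempty := hSne.image _
  have hbdd : BddBelow T := ⟨η₀, by rintro t ⟨x, hx, rfl⟩; exact hval x hx⟩
  have hle : η₀ ≤ sInf T := le_csInf hTne (by rintro t ⟨x, hx, rfl⟩; exact hval x hx)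
  -- sInf T < 0
  obtain ⟨x₀, hx₀, hx₀pos⟩ := hA1 (-μ) hμ (neg_ne_zero.mpr hμne)
  have hx₀neg : ⟪μ, x₀⟫ < 0 := by
    rw [inner_neg_left] at hx₀pos; linarith
  have hneg : sInf T < 0 :=
    lt_of_le_of_lt (csInf_le hbdd ⟨x₀, hx₀, rfl⟩) hx₀neg
  refine ⟨le_antisymm hle ?_, hneg⟩
  by_contra h
  push_neg at h
  set ϑ := sInf T with hϑ
  set ε : ℝ := (ϑ - η₀) / (-2 * ϑ) with hε
  have hεpos : 0 < ε := by
    apply div_pos <;> linarith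
  have hρval : ValidIneq S ((1 + ε) • μ) ((1 + ε) * ϑ) := by
    intro x hx
    have h1 : ϑ ≤ ⟪μ, x⟫ := csInf_le hbdd ⟨x, hx, rfl⟩
    rw [real_inner_smul_left]
    nlinarith
  have hρne : (1 + ε) • μ ≠ μ := by
    intro hcontra
    have : ε • μ = 0 := by
      have := sub_eq_zero.mpr hcontra
      rw [← this]; module
    rcases smul_eq_zero.mp this with h' | h'
    · exact absurd h' (ne_of_gt hεpos)
    · exact hμne h'
  have hρK : μ - (1 + ε) • μ ∈ DualCone K := by
    intro x hxK
    have h1 : 0 ≤ ⟪x, -μ⟫ := hμ x hxK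
    have h2 : μ - (1 + ε) • μ = ε • (-μ) := by module
    rw [h2, real_inner_smul_right]
    positivity
  have hlt : (1 + ε) * ϑ < η₀ := hminim _ _ hρval hρne hρK
  have key : ε * (-2 * ϑ) = ϑ - η₀ := by
    rw [hε]; exact div_mul_cancel₀ _ (by nlinarith)
  nlinarith
end
end

section
/- Suppose Ker(A) ∩ int(K) ≠ ∅. Then for any μ ∈ Im(A*) and any real η₀ with η₀ ≤ ϑ(μ), the inequality (μ;η₀) is K-minimal for S(A,K,B). -/
open RealInnerProductSpace

noncomputable section

variable {E F : Type*} [NormedAddCommGroup E] [InnerProductSpace ℝ E]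
  [NormedAddCommGroup F] [InnerProductSpace ℝ F]
  [FiniteDimensional ℝ E] [FiniteDimensional ℝ F]

/-- If `Ker(A) ∩ int(K) ≠ ∅`, every `μ ∈ Im(A*)` with `η₀ ≤ ϑ(μ)` gives a
`K`-minimal inequality. -/
theorem stmt4 (K : Set E) (A : E →ₗ[ℝ] F) (B : Set F)
    (hK : IsRegularCone K)
    (hslater : ∃ d : E, d ∈ interior K ∧ A d = 0)
    (hSne : ({x | x ∈ K ∧ A x ∈ B} : Set E).Nonempty)
    (μ : E) (hμ0 : μ ≠ 0)
    (hμ : ∃ lam : F, LinearMap.adjoint A lam = μ)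
    (hbdd : BddBelow ((fun x => ⟪μ, x⟫) '' {x | x ∈ K ∧ A x ∈ B}))
    (η₀ : ℝ) (hη : η₀ ≤ sInf ((fun x => ⟪μ, x⟫) '' {x | x ∈ K ∧ A x ∈ B})) :
    KMinimal K {x | x ∈ K ∧ A x ∈ B} μ η₀ := by
  refine ⟨hμ0, ?_, ?_⟩
  · intro x hx
    exact hη.trans (csInf_le hbdd ⟨x, hx, rfl⟩)
  · intro ρ ρ₀ hvalid hρμ hdual
    exfalso
    obtain ⟨d, hdint, hAd⟩ := hslater
    obtain ⟨lam, hlam⟩ := hμ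
    obtain ⟨hcl, hconv, hcone, hpt, -⟩ := hK
    have hdK : d ∈ K := interior_subset hdint
    -- ⟪μ, d⟫ = 0
    have hμd : ⟪μ, d⟫ = 0 := by
      rw [← hlam, LinearMap.adjoint_inner_left, hAd, inner_zero_right]
    -- the pairing of an interior point with a nonzero dual vector is positive
    have hpos : 0 < ⟪d, μ - ρ⟫ := by
      set y := μ - ρ with hy
      have hyne : y ≠ 0 := sub_ne_zero.mpr (Ne.symm hρμ)
      obtain ⟨ε, hε, hball⟩ := Metric.isOpen_iff.mp isOpen_interior d hdint
      have hny : 0 < ‖y‖ := norm_pos_iff.mpr hyne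
      set c : ℝ := ε / (2 * ‖y‖) with hc
      have hcpos : 0 < c := by positivity
      have hmem : d - c • y ∈ K := by
        apply interior_subset (hball ?_)
        simp only [Metric.mem_ball, dist_eq_norm]
        have : ‖d - c • y - d‖ = c * ‖y‖ := by
          simp [norm_smul, abs_of_pos hcpos]
        rw [this, hc, div_mul_eq_mul_div, div_lt_iff₀ (by positivity)]
        nlinarith [hε, hny]
      have h0 := hdual _ hmem
      have hexp : ⟪d - c • y, y⟫ = ⟪d, y⟫ - c * ⟪y, y⟫ := by
        rw [inner_sub_left, real_inner_smul_left]
      rw [hexp] at h0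
      have hyy : ⟪y, y⟫ = ‖y‖ ^ 2 := real_inner_self_eq_norm_sq y
      nlinarith [h0, hyy, hny, hcpos, mul_pos hcpos (mul_pos hny hny)]
    -- but ⟪ρ, d⟫ ≥ 0 from validity along the ray x₀ + t d
    obtain ⟨x₀, hx₀⟩ := hSne
    have hray : ∀ t : ℝ, 0 < t → ρ₀ ≤ ⟪ρ, x₀⟫ + t * ⟪ρ, d⟫ := by
      intro t ht
      have htd : t • d ∈ K := hcone t ht d hdK
      have hmem : x₀ + t • d ∈ K := by
        have h := hconv hx₀.1 htd (by norm_num : (0:ℝ) ≤ 1/2)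
          (by norm_num : (0:ℝ) ≤ 1/2) (by norm_num)
        have h2 := hcone 2 (by norm_num) _ h
        have : (2:ℝ) • ((1/2 : ℝ) • x₀ + (1/2 : ℝ) • (t • d)) = x₀ + t • d := by
          rw [smul_add, smul_smul, smul_smul]; norm_num
        rwa [this] at h2
      have hAx : A (x₀ + t • d) ∈ B := by
        rw [map_add, map_smul, hAd, smul_zero, add_zero]; exact hx₀.2
      have := hvalid _ ⟨hmem, hAx⟩
      rwa [inner_add_right, real_inner_smul_right] at this
    have hρd : 0 ≤ ⟪ρ, d⟫ := by
      by_contra h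
      push_neg at h
      set t : ℝ := max 1 ((ρ₀ - 1 - ⟪ρ, x₀⟫) / ⟪ρ, d⟫) with ht
      have ht1 : 0 < t := lt_of_lt_of_le one_pos (le_max_left _ _)
      have h2 := hray t ht1
      have h3 : t * ⟪ρ, d⟫ ≤ ρ₀ - 1 - ⟪ρ, x₀⟫ := by
        have : (ρ₀ - 1 - ⟪ρ, x₀⟫) / ⟪ρ, d⟫ ≤ t := le_max_right _ _
        calc t * ⟪ρ, d⟫ ≤ ((ρ₀ - 1 - ⟪ρ, x₀⟫) / ⟪ρ, d⟫) * ⟪ρ, d⟫ := by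
              exact mul_le_mul_of_nonpos_right this h.le
          _ = ρ₀ - 1 - ⟪ρ, x₀⟫ := div_mul_cancel₀ _ h.ne
      linarith
    have hexpand : ⟪d, μ - ρ⟫ = ⟪μ, d⟫ - ⟪ρ, d⟫ := by
      rw [inner_sub_right, real_inner_comm d μ, real_inner_comm d ρ]
    rw [hexpand, hμd] at hpos
    linarith
end
end

section
/- Let (μ;η₀) be valid for S(A,K,B) and suppose there exists a linear map Z : E → E with Z* K ⊆ K (i.e. Z*v ∈ K for all v ∈ K), A∘Z* = A, and μ − Zμ ∈ K* \ {0}. Then (μ;η₀) is not K-minimal. -/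
open RealInnerProductSpace

noncomputable section

variable {E F : Type*} [NormedAddCommGroup E] [InnerProductSpace ℝ E]
  [NormedAddCommGroup F] [InnerProductSpace ℝ F]
  [FiniteDimensional ℝ E] [FiniteDimensional ℝ F]

/-- A non-expansiveness necessary condition for `K`-minimality. -/
theorem stmt5 (K : Set E) (A : E →ₗ[ℝ] F) (B : Set F)
    (hK : IsRegularCone K)
    (μ : E) (η₀ : ℝ)
    (hvalid : ValidIneq {x | x ∈ K ∧ A x ∈ B} μ η₀)
    (Z : E →ₗ[ℝ] E)
    (hZK : ∀ v ∈ K, LinearMap.adjoint Z v ∈ K)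
    (hAZ : A ∘ₗ LinearMap.adjoint Z = A)
    (hμZ : μ - Z μ ∈ DualCone K) (hμZ0 : μ - Z μ ≠ 0) :
    ¬ KMinimal K {x | x ∈ K ∧ A x ∈ B} μ η₀ := by
  rintro ⟨hμ0, hv, hmin⟩
  have hvalidZ : ValidIneq {x | x ∈ K ∧ A x ∈ B} (Z μ) η₀ := by
    intro x hx
    have hx' : LinearMap.adjoint Z x ∈ {x | x ∈ K ∧ A x ∈ B} := by
      refine ⟨hZK x hx.1, ?_⟩
      have : A ((LinearMap.adjoint Z) x) = A x := by
        conv_rhs => rw [← hAZ]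
        rfl
      rw [this]; exact hx.2
    have h := hvalid _ hx'
    calc η₀ ≤ ⟪μ, LinearMap.adjoint Z x⟫ := h
      _ = ⟪Z μ, x⟫ := by
          rw [← LinearMap.adjoint_inner_left, LinearMap.adjoint_adjoint]
  have hne : Z μ ≠ μ := by
    intro h
    apply hμZ0
    rw [h]; simp
  have := hmin (Z μ) η₀ hvalidZ hne hμZ
  exact lt_irrefl _ this
end
end

section
/- Every K-minimal valid inequality (μ;η₀) for S(A,K,B) is K-sublinear, i.e., it satisfies condition (A.1(α)) for every α ∈ Ext(K*): ⟨μ,u⟩ ≥ 0 for all u ∈ E with Au = 0 and ⟨α,v⟩u + v ∈ K for all v ∈ Ext(K), in addition to validity (A.2). -/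
open RealInnerProductSpace

noncomputable section

variable {E F : Type*} [NormedAddCommGroup E] [InnerProductSpace ℝ E]
  [NormedAddCommGroup F] [InnerProductSpace ℝ F]
  [FiniteDimensional ℝ E] [FiniteDimensional ℝ F]

/-!
If `⟪μ, u⟫ < 0`, the map `T x = ⟪α, x⟫ • u + x` satisfies `A ∘ T = A` and sends every extreme
ray of `K` into `K`. A regular cone is the closed conic hull of its extreme rays (Krein–Milman
applied to the compact base `{x ∈ K | ⟪e, x⟫ = 1}`, where `e` is an interior point of `K*`, which
exists because `K` is pointed), so `T` maps `K`, and hence `S(A, K, B)`, into itself. Therefore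
`(ρ; η₀)` with `ρ = T* μ = μ + ⟪μ, u⟫ • α` is valid, while `μ - ρ = -⟪μ, u⟫ • α ∈ K* \ {0}`,
contradicting `K`-minimality.
-/

section

variable {V : Type*} [NormedAddCommGroup V] [InnerProductSpace ℝ V]

lemma smul_mem_dualCone {K : Set V} {y : V} (hy : y ∈ DualCone K) {c : ℝ} (hc : 0 ≤ c) :
    c • y ∈ DualCone K := fun x hx => by
  rw [real_inner_smul_right]
  exact mul_nonneg hc (hy x hx)

lemma KMinimal.sub_notMem_dualCone_of_mapsTo {K S : Set V} {μ ρ : V} {η : ℝ}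
    (hmin : KMinimal K S μ η) {T : V → V} (hT : Set.MapsTo T S S)
    (hρ : ∀ x, ⟪ρ, x⟫ = ⟪μ, T x⟫) (hne : ρ ≠ μ) : μ - ρ ∉ DualCone K := fun h => by
  have hvalid : ValidIneq S ρ η := fun x hx => (hρ x).symm ▸ hmin.2.1 (T x) (hT hx)
  exact lt_irrefl η (hmin.2.2 ρ η hvalid hne h)

namespace IsRegularCone

variable {K : Set V}

lemma zero_mem (hK : IsRegularCone K) : (0 : V) ∈ K := by
  obtain ⟨x, hx⟩ := hK.2.2.2.2
  have hlim : Filter.Tendsto (fun n : ℕ => (1 / ((n : ℝ) + 1)) • x) Filter.atTop (nhds 0) := by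
    simpa using (tendsto_one_div_add_atTop_nhds_zero_nat (𝕜 := ℝ)).smul_const x
  exact hK.1.mem_of_tendsto hlim
    (Filter.Eventually.of_forall fun n => hK.2.2.1 _ (by positivity) x (interior_subset hx))

lemma smul_mem (hK : IsRegularCone K) {c : ℝ} (hc : 0 ≤ c) {x : V} (hx : x ∈ K) : c • x ∈ K := by
  rcases hc.eq_or_lt with rfl | hc
  · simpa using hK.zero_mem
  · exact hK.2.2.1 c hc x hx

lemma add_mem (hK : IsRegularCone K) {x y : V} (hx : x ∈ K) (hy : y ∈ K) : x + y ∈ K := by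
  have hmid : (1 / 2 : ℝ) • x + (1 / 2 : ℝ) • y ∈ K := hK.2.1 hx hy (by norm_num) (by norm_num)
    (by norm_num)
  simpa [smul_add, smul_smul] using hK.2.2.1 2 two_pos _ hmid

def toProperCone (hK : IsRegularCone K) : ProperCone ℝ V where
  carrier := K
  add_mem' := hK.add_mem
  zero_mem' := hK.zero_mem
  smul_mem' c _ hx := hK.smul_mem c.2 hx
  isClosed' := hK.1

lemma dualCone_dualCone [FiniteDimensional ℝ V] (hK : IsRegularCone K) :
    DualCone (DualCone K) = K :=
  congrArg SetLike.coe (ProperCone.innerDual_innerDual hK.toProperCone)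

lemma interior_dualCone_nonempty [FiniteDimensional ℝ V] (hK : IsRegularCone K) :
    (interior (DualCone K)).Nonempty := by
  have hconv : Convex ℝ (DualCone K) := (ProperCone.innerDual K).convex
  have hzero : (0 : V) ∈ DualCone K := (ProperCone.innerDual K).zero_mem
  by_contra hempty
  have hspan : vectorSpan ℝ (DualCone K) ≠ ⊤ := fun h => hempty <|
    hconv.interior_nonempty_iff_affineSpan_eq_top.2 <|
      (AffineSubspace.affineSpan_eq_top_iff_vectorSpan_eq_top_of_nonempty ℝ V V ⟨0, hzero⟩).2 h
  obtain ⟨n, hn, hn0⟩ := Submodule.exists_mem_ne_zero_of_ne_bot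
    (mt Submodule.orthogonal_eq_bot_iff.1 hspan)
  -- `K*` lies in the hyperplane `n⊥`, so both `n` and `-n` lie in `K** = K`.
  have horth : ∀ y ∈ DualCone K, ⟪y, n⟫ = 0 := fun y hy =>
    Submodule.inner_right_of_mem_orthogonal
      (by simpa using vsub_mem_vectorSpan ℝ hy hzero) hn
  have hnK : n ∈ K := by
    rw [← hK.dualCone_dualCone]
    intro y hy
    rw [horth y hy]
  have hnegK : -n ∈ K := by
    rw [← hK.dualCone_dualCone]
    intro y hy
    rw [inner_neg_right, horth y hy, neg_zero]
  exact hn0 (hK.2.2.2.1 ⟨hnK, by simpa using hnegK⟩)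

lemma exists_mul_norm_le_inner [FiniteDimensional ℝ V] (hK : IsRegularCone K) :
    ∃ e : V, ∃ ε : ℝ, 0 < ε ∧ ∀ x ∈ K, ε * ‖x‖ ≤ ⟪e, x⟫ := by
  obtain ⟨e, he⟩ := hK.interior_dualCone_nonempty
  obtain ⟨r, hr, hball⟩ := Metric.nhds_basis_closedBall.mem_iff.1 (mem_interior_iff_mem_nhds.1 he)
  refine ⟨e, r, hr, fun x hx => ?_⟩
  rcases eq_or_ne x 0 with rfl | hx0
  · simp
  have hmem : e - (r * ‖x‖⁻¹) • x ∈ DualCone K := hball <| by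
    rw [Metric.mem_closedBall, dist_eq_norm, sub_sub_cancel_left, norm_neg, norm_smul,
      Real.norm_of_nonneg (by positivity), mul_assoc, inv_mul_cancel₀ (norm_ne_zero_iff.2 hx0),
      mul_one]
  have hpos := hmem x hx
  rw [inner_sub_right, real_inner_smul_right, real_inner_self_eq_norm_sq, real_inner_comm] at hpos
  have hnorm : ‖x‖⁻¹ * ‖x‖ ^ 2 = ‖x‖ := by
    field_simp [norm_ne_zero_iff.2 hx0]
  nlinarith

end IsRegularCone

def coneBase (K : Set V) (e : V) : Set V := {x ∈ K | ⟪e, x⟫ = 1}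

variable {K : Set V} {e : V} {ε : ℝ}

lemma eq_zero_of_mem_of_inner_eq_zero (hε : 0 < ε) (hbd : ∀ x ∈ K, ε * ‖x‖ ≤ ⟪e, x⟫) {x : V}
    (hx : x ∈ K) (h : ⟪e, x⟫ = 0) : x = 0 :=
  norm_le_zero_iff.1 (by nlinarith [hbd x hx, norm_nonneg x])

lemma inv_inner_smul_mem_coneBase (hK : IsRegularCone K) {x : V} (hx : x ∈ K)
    (hpos : 0 < ⟪e, x⟫) : ⟪e, x⟫⁻¹ • x ∈ coneBase K e :=
  ⟨hK.smul_mem (inv_nonneg.2 hpos.le) hx, by rw [real_inner_smul_right, inv_mul_cancel₀ hpos.ne']⟩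

lemma convex_coneBase (hK : Convex ℝ K) : Convex ℝ (coneBase K e) :=
  hK.inter (convex_hyperplane (f := fun x => ⟪e, x⟫)
    ⟨fun x y => inner_add_right e x y, fun c x => real_inner_smul_right e x c⟩ 1)

lemma isCompact_coneBase [FiniteDimensional ℝ V] (hK : IsClosed K) (hε : 0 < ε)
    (hbd : ∀ x ∈ K, ε * ‖x‖ ≤ ⟪e, x⟫) : IsCompact (coneBase K e) := by
  refine Metric.isCompact_of_isClosed_isBounded
    (hK.inter (isClosed_eq (continuous_const.inner continuous_id) continuous_const))
    (isBounded_iff_forall_norm_le.2 ⟨ε⁻¹, fun x hx => ?_⟩)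
  have hx' := hbd x hx.1
  rw [hx.2] at hx'
  simpa using (le_inv_mul_iff₀ hε).2 hx'

lemma isExtremeRay_of_mem_extremePoints_coneBase (hK : IsRegularCone K) (hε : 0 < ε)
    (hbd : ∀ x ∈ K, ε * ‖x‖ ≤ ⟪e, x⟫) {x : V} (hx : x ∈ (coneBase K e).extremePoints ℝ) :
    IsExtremeRay K x := by
  obtain ⟨⟨hxK, hxe⟩, hext⟩ := mem_extremePoints.1 hx
  refine ⟨hxK, fun h => by simp [h] at hxe, fun y hy z hz hxyz => ?_⟩
  have hsum : ⟪e, y⟫ + ⟪e, z⟫ = 1 := by rw [← inner_add_right, ← hxyz, hxe]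
  have hy0 : 0 ≤ ⟪e, y⟫ := le_trans (by positivity) (hbd y hy)
  have hz0 : 0 ≤ ⟪e, z⟫ := le_trans (by positivity) (hbd z hz)
  rcases hy0.eq_or_lt with hy0 | hypos
  · exact ⟨0, le_rfl, by rw [zero_smul, eq_zero_of_mem_of_inner_eq_zero hε hbd hy hy0.symm]⟩
  rcases hz0.eq_or_lt with hz0 | hzpos
  · exact ⟨1, zero_le_one, by
      rw [one_smul, hxyz, eq_zero_of_mem_of_inner_eq_zero hε hbd hz hz0.symm, add_zero]⟩
  -- `x` is a proper convex combination of the normalizations of `y` and `z`.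
  have hseg : x ∈ openSegment ℝ (⟪e, y⟫⁻¹ • y) (⟪e, z⟫⁻¹ • z) :=
    ⟨⟪e, y⟫, ⟪e, z⟫, hypos, hzpos, hsum, by
      rw [smul_smul, smul_smul, mul_inv_cancel₀ hypos.ne', mul_inv_cancel₀ hzpos.ne', one_smul,
        one_smul, hxyz]⟩
  have hyx := (hext _ (inv_inner_smul_mem_coneBase hK hy hypos) _
    (inv_inner_smul_mem_coneBase hK hz hzpos) hseg).1
  exact ⟨⟪e, y⟫, hypos.le, by rw [← hyx, smul_smul, mul_inv_cancel₀ hypos.ne', one_smul]⟩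

lemma IsRegularCone.subset_of_isExtremeRay_mem [FiniteDimensional ℝ V] (hK : IsRegularCone K)
    {C : ProperCone ℝ V} (hC : ∀ v, IsExtremeRay K v → v ∈ C) : K ⊆ C := by
  obtain ⟨e, ε, hε, hbd⟩ := hK.exists_mul_norm_le_inner
  have hbase : coneBase K e ⊆ C := by
    rw [← closure_convexHull_extremePoints (isCompact_coneBase hK.1 hε hbd)
      (convex_coneBase hK.2.1)]
    exact closure_minimal (convexHull_min
      (fun v hv => hC v (isExtremeRay_of_mem_extremePoints_coneBase hK hε hbd hv)) C.convex)
      C.isClosed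
  intro x hx
  rcases eq_or_ne x 0 with rfl | hx0
  · exact C.zero_mem
  have hpos : 0 < ⟪e, x⟫ := lt_of_lt_of_le (by positivity) (hbd x hx)
  simpa [smul_smul, mul_inv_cancel₀ hpos.ne'] using
    C.smul_mem (hbase (inv_inner_smul_mem_coneBase hK hx hpos)) hpos.le

end

/-- Every `K`-minimal valid inequality is `K`-sublinear. -/
theorem stmt7 (K : Set E) (A : E →ₗ[ℝ] F) (B : Set F)
    (hK : IsRegularCone K)
    (μ : E) (η₀ : ℝ)
    (hmin : KMinimal K {x | x ∈ K ∧ A x ∈ B} μ η₀) :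
    KSublinear K {x | x ∈ K ∧ A x ∈ B} A μ η₀ := by
  refine ⟨hmin.1, hmin.2.1, fun α hα u hAu hray => ?_⟩
  by_contra! hneg
  let T : E →L[ℝ] E := (innerSL ℝ α).smulRight u + ContinuousLinearMap.id ℝ E
  have hTK : K ⊆ hK.toProperCone.comap T := hK.subset_of_isExtremeRay_mem hray
  have hTS : Set.MapsTo T {x | x ∈ K ∧ A x ∈ B} {x | x ∈ K ∧ A x ∈ B} :=
    fun x hx => ⟨hTK hx.1, by simpa [T, hAu] using hx.2⟩
  have hne : μ + ⟪μ, u⟫ • α ≠ μ := by simpa using ⟨hneg.ne, hα.2.1⟩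
  refine hmin.sub_notMem_dualCone_of_mapsTo hTS (fun x => ?_) hne ?_
  · simp only [T, add_apply, ContinuousLinearMap.smulRight_apply,
      innerSL_apply_apply, ContinuousLinearMap.id_apply, inner_add_left, inner_add_right,
      real_inner_smul_left, real_inner_smul_right]
    ring
  · rw [sub_add_cancel_left, ← neg_smul]
    exact smul_mem_dualCone hα.1 (by linarith)
end
end

section
/- Suppose μ ∈ K* + Im(A*) and z ∈ K is such that there exists γ ∈ K* with ⟨γ,z⟩ = 0 and γ ∈ μ − Im(A*). Then σ_{D_μ}(Az) = ⟨μ,z⟩ for D_μ = {λ : μ − A*λ ∈ K*}. -/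
open RealInnerProductSpace

noncomputable section

variable {E F : Type*} [NormedAddCommGroup E] [InnerProductSpace ℝ E]
  [NormedAddCommGroup F] [InnerProductSpace ℝ F]
  [FiniteDimensional ℝ E] [FiniteDimensional ℝ F]

/-- If `⊥_z ∩ (μ − Im(A*)) ≠ ∅` then `σ_(D_μ)(Az) = ⟨μ,z⟩`. -/
theorem stmt12 (K : Set E) (A : E →ₗ[ℝ] F)
    (hK : IsRegularCone K)
    (μ : E) (hμ : ∃ γ ∈ DualCone K, ∃ lam : F, μ = γ + LinearMap.adjoint A lam)
    (z : E) (hz : z ∈ K)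
    (γ : E) (hγK : γ ∈ DualCone K) (hγz : ⟪γ, z⟫ = 0)
    (hγμ : ∃ lam : F, γ = μ - LinearMap.adjoint A lam) :
    SuppFn (CutGenSet K A μ) (A z) = ⟪μ, z⟫ := by
  obtain ⟨lam₀, hlam₀⟩ := hγμ
  have hmem : lam₀ ∈ CutGenSet K A μ := by
    simp only [CutGenSet, Set.mem_setOf_eq, ← hlam₀]; exact hγK
  have hval : ⟪A z, lam₀⟫ = ⟪μ, z⟫ := by
    have h : LinearMap.adjoint A lam₀ = μ - γ := by rw [hlam₀]; abel
    rw [real_inner_comm, ← LinearMap.adjoint_inner_left, h, inner_sub_left,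
      hγz, sub_zero]
  apply IsGreatest.csSup_eq
  constructor
  · exact ⟨lam₀, hmem, hval⟩
  · rintro x ⟨lam, hlam, rfl⟩
    have h1 : 0 ≤ ⟪z, μ - LinearMap.adjoint A lam⟫ := hlam z hz
    rw [inner_sub_right, LinearMap.adjoint_inner_right] at h1
    show ⟪A z, lam⟫ ≤ ⟪μ, z⟫
    linarith [real_inner_comm μ z]
end
end

section
/- For any μ ∈ Im(A*), we have σ_{D_μ}(Az) = ⟨μ,z⟩ for all z ∈ K, where D_μ = {λ ∈ ℝ^m : μ − A*λ ∈ K*}. -/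
open RealInnerProductSpace

noncomputable section

variable {E F : Type*} [NormedAddCommGroup E] [InnerProductSpace ℝ E]
  [NormedAddCommGroup F] [InnerProductSpace ℝ F]
  [FiniteDimensional ℝ E] [FiniteDimensional ℝ F]

/-- For `μ ∈ Im(A*)`, `σ_(D_μ)(Az) = ⟨μ,z⟩` for all `z ∈ K`. -/
theorem stmt13 (K : Set E) (A : E →ₗ[ℝ] F)
    (hK : IsRegularCone K)
    (μ : E) (hμ : ∃ lam : F, LinearMap.adjoint A lam = μ) :
    ∀ z ∈ K, SuppFn (CutGenSet K A μ) (A z) = ⟪μ, z⟫ := by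
  intro z hz
  obtain ⟨lam0, hl0⟩ := hμ
  have hmem0 : lam0 ∈ CutGenSet K A μ := by
    simp only [CutGenSet, Set.mem_setOf_eq, hl0, sub_self]
    intro x _
    simp [inner_zero_right]
  have hval : ∀ lam ∈ CutGenSet K A μ, ⟪A z, lam⟫ ≤ ⟪μ, z⟫ := by
    intro lam hlam
    have h := hlam z hz
    have h2 : ⟪A z, lam⟫ = ⟪LinearMap.adjoint A lam, z⟫ := by
      rw [LinearMap.adjoint_inner_left, real_inner_comm]
    rw [inner_sub_right] at h
    have e1 : ⟪LinearMap.adjoint A lam, z⟫ = ⟪z, LinearMap.adjoint A lam⟫ := real_inner_comm _ _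
    have e2 : ⟪μ, z⟫ = ⟪z, μ⟫ := real_inner_comm _ _
    rw [h2]
    linarith
  have hub : ⟪μ, z⟫ ∈ upperBounds ((fun lam => ⟪A z, lam⟫) '' CutGenSet K A μ) := by
    rintro r ⟨lam, hlam, rfl⟩
    exact hval lam hlam
  have heq0 : ⟪A z, lam0⟫ = ⟪μ, z⟫ := by
    rw [← hl0, LinearMap.adjoint_inner_left, real_inner_comm]
  apply le_antisymm
  · exact csSup_le ⟨⟪A z, lam0⟫, lam0, hmem0, rfl⟩ (fun r ⟨lam, hlam, hr⟩ => hr ▸ hval lam hlam)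
  · rw [← heq0]
    exact le_csSup ⟨⟪μ, z⟫, hub⟩ ⟨lam0, hmem0, rfl⟩
end
end

section
/- Assume Assumption 1 and let (μ;η₀) be a K-sublinear inequality with η₀ = inf_{b∈B} σ_{D_μ}(b) > −∞. If there exist points x¹,…,x^k ∈ K with Axⁱ ∈ B, ⟨μ,xⁱ⟩ = η₀ for each i, and Σᵢ xⁱ ∈ int(K), then (μ;η₀) is K-minimal. -/
open RealInnerProductSpace

noncomputable section

variable {E F : Type*} [NormedAddCommGroup E] [InnerProductSpace ℝ E]
  [NormedAddCommGroup F] [InnerProductSpace ℝ F]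
  [FiniteDimensional ℝ E] [FiniteDimensional ℝ F]

/-- A sufficient condition for `K`-minimality of a `K`-sublinear inequality. -/
theorem stmt18 (K : Set E) (A : E →ₗ[ℝ] F) (B : Set F)
    (hK : IsRegularCone K) (hB : B.Nonempty)
    (hA1 : ∀ δ ∈ DualCone K, δ ≠ 0 → ∃ x ∈ {x | x ∈ K ∧ A x ∈ B}, 0 < ⟪δ, x⟫)
    (μ : E) (η₀ : ℝ)
    (hsub : KSublinear K {x | x ∈ K ∧ A x ∈ B} A μ η₀)
    (hbdd : BddBelow (SuppFn (CutGenSet K A μ) '' B))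
    (hη : η₀ = sInf (SuppFn (CutGenSet K A μ) '' B))
    (k : ℕ) (x : Fin k → E)
    (hxK : ∀ i, x i ∈ K) (hxB : ∀ i, A (x i) ∈ B)
    (hxtight : ∀ i, ⟪μ, x i⟫ = η₀)
    (hsum : (∑ i, x i) ∈ interior K) :
    KMinimal K {x | x ∈ K ∧ A x ∈ B} μ η₀ := by
  obtain ⟨hμ, hval, _⟩ := hsub
  refine ⟨hμ, hval, ?_⟩
  intro ρ ρ₀ hρval hρne hδ
  set δ := μ - ρ with hδdef
  have hδne : δ ≠ 0 := sub_ne_zero.mpr (Ne.symm hρne)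
  have hpos : 0 < ⟪δ, ∑ i, x i⟫ := by
    have hge : 0 ≤ ⟪∑ i, x i, δ⟫ := hδ _ (interior_subset hsum)
    rcases lt_or_eq_of_le hge with h | h
    · rwa [real_inner_comm]
    · exfalso
      obtain ⟨r, hr, hball⟩ := Metric.isOpen_iff.mp isOpen_interior _ hsum
      have hδnorm : 0 < ‖δ‖ := norm_pos_iff.mpr hδne
      set t := r / (2 * ‖δ‖) with ht_def
      have ht : 0 < t := div_pos hr (by positivity)
      have hmem : (∑ i, x i) - t • δ ∈ K := by
        apply interior_subset
        apply hball
        rw [Metric.mem_ball, dist_eq_norm]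
        have : (∑ i, x i) - t • δ - ∑ i, x i = -(t • δ) := by abel
        rw [this, norm_neg, norm_smul, Real.norm_eq_abs, abs_of_pos ht, ht_def]
        rw [div_mul_eq_mul_div, mul_comm 2 ‖δ‖, ← div_div, mul_div_assoc,
          div_self (ne_of_gt hδnorm), mul_one]
        linarith
      have h2 := hδ _ hmem
      rw [inner_sub_left, real_inner_smul_left, ← h, real_inner_self_eq_norm_sq] at h2
      nlinarith [mul_pos ht (pow_pos hδnorm 2)]
  have hexists : ∃ i, 0 < ⟪δ, x i⟫ := by
    by_contra hcon
    push_neg at hcon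
    rw [inner_sum] at hpos
    have : (∑ i, ⟪δ, x i⟫) ≤ 0 := Finset.sum_nonpos fun i _ => hcon i
    linarith
  obtain ⟨i, hi⟩ := hexists
  have hxS : x i ∈ {x | x ∈ K ∧ A x ∈ B} := ⟨hxK i, hxB i⟩
  have h1 : ρ₀ ≤ ⟪ρ, x i⟫ := hρval _ hxS
  have h2 : ⟪ρ, x i⟫ = η₀ - ⟪δ, x i⟫ := by
    rw [hδdef, inner_sub_left, hxtight i]; ring
  linarith
end
end
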